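/- Let u, v : B₁ → ℝ be continuous functions with u, v ≥ 0, harmonic on their respective positivity sets {u>0} and {v>0}, and suppose {v>0} ⊆ {u>0}. Define m := sqrt(u² + v²). Then m is subharmonic (in the distributional sense) on the open set {u>0}. -/

import Mathlib

open MeasureTheory Metric Set

/-- The (pointwise) Laplacian of `f : ℝ^N → ℝ`, as sum of pure second derivatives. -/
noncomputable def lapl {N : ℕ} (f : EuclideanSpace ℝ (Fin N) → ℝ)
    (x : EuclideanSpace ℝ (Fin N)) : ℝ :=
  ∑ i : Fin N,
    fderiv ℝ (fun y => fderiv ℝ f y (EuclideanSpace.single i 1)) x (EuclideanSpace.single i 1)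

/-- `f` is harmonic on the set `s`: twice continuously differentiable with vanishing Laplacian. -/
def IsHarmonicOn {N : ℕ} (f : EuclideanSpace ℝ (Fin N) → ℝ)
    (s : Set (EuclideanSpace ℝ (Fin N))) : Prop :=
  ContDiffOn ℝ 2 f s ∧ ∀ x ∈ s, lapl f x = 0

/-- `f` is subharmonic in the sense of distributions on the open set `Ω`:
`∫_Ω f Δφ ≥ 0` for every nonnegative smooth test function `φ` compactly supported in `Ω`. -/
def IsSubharmonicDistribOn {N : ℕ} (f : EuclideanSpace ℝ (Fin N) → ℝ)
    (Ω : Set (EuclideanSpace ℝ (Fin N))) : Prop :=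
  ∀ φ : EuclideanSpace ℝ (Fin N) → ℝ, ContDiff ℝ (⊤ : ℕ∞) φ → HasCompactSupport φ →
    tsupport φ ⊆ Ω → (∀ x, 0 ≤ φ x) → 0 ≤ ∫ x in Ω, f x * lapl φ x

open Filter

section AuxHelpers

variable {N : ℕ}
local notation "E" => EuclideanSpace ℝ (Fin N)

lemma fderiv2_congr {f g : E → ℝ} {x : E} (e : E) (h : f =ᶠ[nhds x] g) :
    fderiv ℝ (fun y => fderiv ℝ f y e) x e = fderiv ℝ (fun y => fderiv ℝ g y e) x e := by
  have h1 : (fun y => fderiv ℝ f y e) =ᶠ[nhds x] (fun y => fderiv ℝ g y e) := by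
    filter_upwards [h.eventuallyEq_nhds] with y hy
    rw [hy.fderiv_eq]
  rw [h1.fderiv_eq]

lemma continuous_fderiv2 {f : E → ℝ} (e : E) (hf : ContDiff ℝ 2 f) :
    Continuous fun x => fderiv ℝ (fun y => fderiv ℝ f y e) x e := by
  have h1 : ContDiff ℝ 1 fun y => fderiv ℝ f y e :=
    (hf.fderiv_right (by norm_num)).clm_apply contDiff_const
  exact (h1.continuous_fderiv (by norm_num)).clm_apply continuous_const

lemma hcs_fderiv_apply {f : E → ℝ} (e : E) (hf : HasCompactSupport f) :
    HasCompactSupport fun y => fderiv ℝ f y e := by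
  have := (hf.fderiv ℝ).comp_left (g := fun L : E →L[ℝ] ℝ => L e) rfl
  exact this

/-- Integration by parts twice in one direction. -/
lemma ibp_dir {F φ : E → ℝ} (e : E) (hF : ContDiff ℝ 2 F) (hFc : HasCompactSupport F)
    (hφ : ContDiff ℝ 2 φ) (hφc : HasCompactSupport φ) :
    ∫ x, F x * fderiv ℝ (fun y => fderiv ℝ φ y e) x e
      = ∫ x, fderiv ℝ (fun y => fderiv ℝ F y e) x e * φ x := by
  have h2 : (2 : WithTop ℕ∞) = 1 + 1 := by norm_num
  -- the directional derivative functions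
  set Fe : E → ℝ := fun y => fderiv ℝ F y e with hFe
  set φe : E → ℝ := fun y => fderiv ℝ φ y e with hφe
  have hFe1 : ContDiff ℝ 1 Fe := (hF.fderiv_right (by norm_num)).clm_apply contDiff_const
  have hφe1 : ContDiff ℝ 1 φe := (hφ.fderiv_right (by norm_num)).clm_apply contDiff_const
  have hFec : HasCompactSupport Fe := hcs_fderiv_apply e hFc
  have hφec : HasCompactSupport φe := hcs_fderiv_apply e hφc
  obtain ⟨C1, hC1⟩ := hφe1.lipschitzWith_of_hasCompactSupport hφec (by norm_num)
  obtain ⟨C2, hC2⟩ := hF.lipschitzWith_of_hasCompactSupport hFc (by norm_num)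
  obtain ⟨C3, hC3⟩ := hφ.lipschitzWith_of_hasCompactSupport hφc (by norm_num)
  obtain ⟨C4, hC4⟩ := hFe1.lipschitzWith_of_hasCompactSupport hFec (by norm_num)
  have dF : Differentiable ℝ F := hF.differentiable (by norm_num)
  have dφ : Differentiable ℝ φ := hφ.differentiable (by norm_num)
  have dFe : Differentiable ℝ Fe := hFe1.differentiable (by norm_num)
  have dφe : Differentiable ℝ φe := hφe1.differentiable (by norm_num)
  calc ∫ x, F x * fderiv ℝ (fun y => fderiv ℝ φ y e) x e
      = ∫ x, lineDeriv ℝ φe x e * F x := by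
        congr 1; ext x
        rw [(dφe x).lineDeriv_eq_fderiv, mul_comm]
    _ = ∫ x, lineDeriv ℝ F x (-e) * φe x := hC1.integral_lineDeriv_mul_eq hC2 hFc e
    _ = ∫ x, lineDeriv ℝ φ x e * (-(Fe x)) := by
        congr 1; ext x
        rw [(dF x).lineDeriv_eq_fderiv, (dφ x).lineDeriv_eq_fderiv]
        simp [hFe]; ring
    _ = -∫ x, lineDeriv ℝ φ x e * Fe x := by
        rw [← integral_neg]; congr 1; ext x; ring
    _ = -∫ x, lineDeriv ℝ Fe x (-e) * φ x := by
        rw [hC3.integral_lineDeriv_mul_eq hC4 hFec e]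
    _ = ∫ x, fderiv ℝ (fun y => fderiv ℝ F y e) x e * φ x := by
        rw [← integral_neg]; congr 1; ext x
        rw [(dFe x).lineDeriv_eq_fderiv]
        simp [hFe]

lemma hcs_fderiv2 {f : E → ℝ} (e : E) (hf : HasCompactSupport f) :
    HasCompactSupport fun x => fderiv ℝ (fun y => fderiv ℝ f y e) x e :=
  hcs_fderiv_apply e (hcs_fderiv_apply e hf)

lemma continuous_lapl {f : E → ℝ} (hf : ContDiff ℝ 2 f) : Continuous (lapl f) :=
  continuous_finset_sum _ fun i _ => continuous_fderiv2 _ hf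

lemma ibp {F φ : E → ℝ} (hF : ContDiff ℝ 2 F) (hFc : HasCompactSupport F)
    (hφ : ContDiff ℝ 2 φ) (hφc : HasCompactSupport φ) :
    ∫ x, F x * lapl φ x = ∫ x, lapl F x * φ x := by
  have h1 : ∀ x, F x * lapl φ x = ∑ i : Fin N,
      F x * fderiv ℝ (fun y => fderiv ℝ φ y (EuclideanSpace.single i 1)) x
        (EuclideanSpace.single i 1) := fun x => by rw [lapl, Finset.mul_sum]
  have h2 : ∀ x, lapl F x * φ x = ∑ i : Fin N,
      fderiv ℝ (fun y => fderiv ℝ F y (EuclideanSpace.single i 1)) x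
        (EuclideanSpace.single i 1) * φ x := fun x => by rw [lapl, Finset.sum_mul]
  simp_rw [h1, h2]
  rw [integral_finset_sum, integral_finset_sum]
  · exact Finset.sum_congr rfl fun i _ => ibp_dir _ hF hFc hφ hφc
  · intro i _
    exact ((continuous_fderiv2 _ hF).mul (hφ.continuous)).integrable_of_hasCompactSupport
      ((hcs_fderiv2 _ hFc).mul_right)
  · intro i _
    exact (hF.continuous.mul (continuous_fderiv2 _ hφ)).integrable_of_hasCompactSupport
      ((hcs_fderiv2 _ hφc).mul_left)

end AuxHelpers

lemma expNegInvGlue_monotone : Monotone expNegInvGlue := by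
  intro x y hxy
  rcases le_or_gt x 0 with hx | hx
  · rw [expNegInvGlue.zero_of_nonpos hx]
    exact expNegInvGlue.nonneg y
  · have hy : 0 < y := lt_of_lt_of_le hx hxy
    rw [expNegInvGlue, expNegInvGlue, if_neg (not_le.2 hx), if_neg (not_le.2 hy)]
    apply Real.exp_le_exp.2
    simp only [neg_le_neg_iff]
    exact inv_anti₀ hx hxy

lemma smoothTransition_monotone : Monotone Real.smoothTransition := by
  intro x y hxy
  unfold Real.smoothTransition
  have hdx := Real.smoothTransition.pos_denom x
  have hdy := Real.smoothTransition.pos_denom y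
  rw [div_le_div_iff₀ hdx hdy]
  have h1 : expNegInvGlue x ≤ expNegInvGlue y := expNegInvGlue_monotone hxy
  have h2 : expNegInvGlue (1 - y) ≤ expNegInvGlue (1 - x) :=
    expNegInvGlue_monotone (by linarith)
  nlinarith [expNegInvGlue.nonneg x, expNegInvGlue.nonneg y,
    expNegInvGlue.nonneg (1 - x), expNegInvGlue.nonneg (1 - y)]

lemma Monotone.deriv_nonneg' {f : ℝ → ℝ} (hf : Monotone f) {x d : ℝ}
    (hd : HasDerivAt f d x) : 0 ≤ d := by
  rw [hasDerivAt_iff_tendsto_slope] at hd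
  refine _root_.ge_of_tendsto hd ?_
  filter_upwards [self_mem_nhdsWithin] with y (hy : y ∈ ({x}ᶜ : Set ℝ))
  have hy' : y ≠ x := hy
  rcases lt_or_gt_of_ne hy' with h | h
  · rw [slope_def_field]
    rw [div_nonneg_iff]
    exact Or.inr ⟨by simpa using hf h.le, by linarith⟩
  · rw [slope_def_field]
    exact div_nonneg (by simpa using hf h.le) (by linarith)

lemma exists_chi {δ : ℝ} (hδ : 0 < δ) : ∃ χ σ σ' : ℝ → ℝ,
    ContDiff ℝ 2 χ ∧ (∀ t, HasDerivAt χ (σ t) t) ∧ (∀ t, HasDerivAt σ (σ' t) t) ∧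
    (∀ t, 0 ≤ σ t) ∧ (∀ t, 0 ≤ σ' t) ∧ (∀ t, t ≤ δ → χ t = 0) ∧
    (∀ t, 0 ≤ t → 0 ≤ t - χ t ∧ t - χ t ≤ 2 * δ) := by
  set σ : ℝ → ℝ := fun s => Real.smoothTransition (s / δ - 1) with hσ
  set σ' : ℝ → ℝ := fun s => deriv Real.smoothTransition (s / δ - 1) * (1 / δ) with hσ'
  set χ : ℝ → ℝ := fun t => ∫ s in (0:ℝ)..t, σ s with hχ
  have σcont : Continuous σ :=
    Real.smoothTransition.continuous.comp ((continuous_id.div_const δ).sub continuous_const)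
  have σ2 : ContDiff ℝ 1 σ :=
    Real.smoothTransition.contDiff.comp ((contDiff_id.div_const δ).sub contDiff_const)
  have hχd : ∀ t, HasDerivAt χ (σ t) t := by
    intro t
    exact intervalIntegral.integral_hasDerivAt_right (σcont.intervalIntegrable _ _)
      σcont.stronglyMeasurable.stronglyMeasurableAtFilter σcont.continuousAt
  have hℓd : ∀ t : ℝ, HasDerivAt (fun s : ℝ => s / δ - 1) (1 / δ) t := by
    intro t
    simpa using ((hasDerivAt_id t).div_const δ).sub_const 1
  have hσd : ∀ t, HasDerivAt σ (σ' t) t := by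
    intro t
    have hst : HasDerivAt Real.smoothTransition
        (deriv Real.smoothTransition (t / δ - 1)) (t / δ - 1) :=
      ((Real.smoothTransition.contDiff (n := 1)).differentiable (by norm_num) _).hasDerivAt
    exact hst.comp t (hℓd t)
  have hσnn : ∀ t, 0 ≤ σ t := fun t => Real.smoothTransition.nonneg _
  have hσ'nn : ∀ t, 0 ≤ σ' t := by
    intro t
    have hst : HasDerivAt Real.smoothTransition
        (deriv Real.smoothTransition (t / δ - 1)) (t / δ - 1) :=
      ((Real.smoothTransition.contDiff (n := 1)).differentiable (by norm_num) _).hasDerivAt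
    exact mul_nonneg (smoothTransition_monotone.deriv_nonneg' hst) (by positivity)
  have hσ0 : ∀ s, s ≤ δ → σ s = 0 := by
    intro s hs
    exact Real.smoothTransition.zero_of_nonpos (by rw [sub_nonpos, div_le_one hδ]; exact hs)
  have hσ1 : ∀ s, 2 * δ ≤ s → σ s = 1 := by
    intro s hs
    have h2 : (2:ℝ) ≤ s / δ := (le_div_iff₀ hδ).2 (by linarith)
    exact Real.smoothTransition.one_of_one_le (by linarith)
  have hχ0 : ∀ t, t ≤ δ → χ t = 0 := by
    intro t ht
    show (∫ s in (0:ℝ)..t, σ s) = 0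
    rw [intervalIntegral.integral_congr (g := fun _ => (0:ℝ))
      (fun s hs => hσ0 s ?_), intervalIntegral.integral_zero]
    rcases mem_uIcc.1 hs with ⟨_, h2⟩ | ⟨_, h2⟩
    · exact le_trans h2 ht
    · exact le_trans h2 hδ.le
  have χ2 : ContDiff ℝ 2 χ := by
    have : (2 : WithTop ℕ∞) = 1 + 1 := by norm_num
    rw [this, contDiff_succ_iff_deriv]
    refine ⟨fun t => (hχd t).differentiableAt, by simp, ?_⟩
    have : deriv χ = σ := funext fun t => (hχd t).deriv
    rw [this]
    exact σ2
  refine ⟨χ, σ, σ', χ2, hχd, hσd, hσnn, hσ'nn, hχ0, ?_⟩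
  intro t ht
  have hsub : t - χ t = ∫ s in (0:ℝ)..t, (1 - σ s) := by
    rw [intervalIntegral.integral_sub (intervalIntegrable_const) (σcont.intervalIntegrable _ _)]
    simp [hχ]
  constructor
  · rw [hsub]
    apply intervalIntegral.integral_nonneg ht
    intro s _
    have := Real.smoothTransition.le_one (s / δ - 1)
    simp only [hσ, sub_nonneg]
    exact this
  · rcases le_or_gt t (2 * δ) with h | h
    · rw [hsub]
      calc ∫ s in (0:ℝ)..t, (1 - σ s) ≤ ∫ _ in (0:ℝ)..t, (1:ℝ) := by
            apply intervalIntegral.integral_mono_on ht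
              ((continuous_const.sub σcont).intervalIntegrable _ _) intervalIntegrable_const
            intro s _
            have := hσnn s
            simp only [Pi.sub_apply]
            linarith
        _ = t := by simp
        _ ≤ 2 * δ := h
    · rw [hsub]
      have hsplit : ∫ s in (0:ℝ)..t, (1 - σ s)
          = (∫ s in (0:ℝ)..(2*δ), (1 - σ s)) + ∫ s in (2*δ)..t, (1 - σ s) := by
        rw [intervalIntegral.integral_add_adjacent_intervals
          (show IntervalIntegrable (fun s => 1 - σ s) volume 0 (2 * δ) from
            (continuous_const.sub σcont).intervalIntegrable _ _)
          (show IntervalIntegrable (fun s => 1 - σ s) volume (2 * δ) t from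
            (continuous_const.sub σcont).intervalIntegrable _ _)]
      have hzero : (∫ s in (2*δ)..t, (1 - σ s)) = 0 := by
        rw [intervalIntegral.integral_congr (g := fun _ => (0:ℝ)) (fun s hs => ?_),
          intervalIntegral.integral_zero]
        rcases mem_uIcc.1 hs with ⟨h1, _⟩ | ⟨h1, _⟩
        · rw [hσ1 s h1]; ring
        · rw [hσ1 s (le_trans h.le h1)]; ring
      rw [hsplit, hzero, add_zero]
      calc ∫ s in (0:ℝ)..(2*δ), (1 - σ s) ≤ ∫ _ in (0:ℝ)..(2*δ), (1:ℝ) := by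
            apply intervalIntegral.integral_mono_on (by positivity)
              ((continuous_const.sub σcont).intervalIntegrable _ _) intervalIntegrable_const
            intro s _
            have := hσnn s
            simp only [Pi.sub_apply]
            linarith
        _ = 2 * δ := by simp

section AuxCalc

variable {N : ℕ}
local notation "E" => EuclideanSpace ℝ (Fin N)

lemma diff_fderiv_apply {f : E → ℝ} {x : E} (e : E) (hf : ContDiffAt ℝ 2 f x) :
    DifferentiableAt ℝ (fun y => fderiv ℝ f y e) x := by
  have h1 : ContDiffAt ℝ 1 (fderiv ℝ f) x := hf.fderiv_right (by norm_num)
  exact (ContinuousLinearMap.apply ℝ ℝ e).differentiableAt.comp x (h1.differentiableAt (by norm_num))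

lemma fderiv2_comp {f : E → ℝ} {g g' g'' : ℝ → ℝ} {x : E} (e : E)
    (hf : ContDiffAt ℝ 2 f x)
    (hg : ∀ᶠ t in nhds (f x), HasDerivAt g (g' t) t)
    (hg' : HasDerivAt g' (g'' (f x)) (f x)) :
    fderiv ℝ (fun y => fderiv ℝ (fun z => g (f z)) y e) x e
      = g'' (f x) * (fderiv ℝ f x e) ^ 2
        + g' (f x) * fderiv ℝ (fun y => fderiv ℝ f y e) x e := by
  have hfd : ∀ᶠ y in nhds x, DifferentiableAt ℝ f y := by
    filter_upwards [hf.eventually (by norm_num)] with y hy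
    exact hy.differentiableAt (by norm_num)
  have hfg : ∀ᶠ y in nhds x, HasDerivAt g (g' (f y)) (f y) :=
    (hf.continuousAt).eventually hg
  have key : (fun y => fderiv ℝ (fun z => g (f z)) y e)
      =ᶠ[nhds x] fun y => g' (f y) * fderiv ℝ f y e := by
    filter_upwards [hfd, hfg] with y hdy hgy
    have h := hgy.comp_hasFDerivAt y hdy.hasFDerivAt
    rw [show (fun z => g (f z)) = g ∘ f from rfl, h.fderiv]
    simp
  rw [key.fderiv_eq]
  have h1 : HasFDerivAt (fun y => g' (f y)) (g'' (f x) • fderiv ℝ f x) x :=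
    hg'.comp_hasFDerivAt x (hf.differentiableAt (by norm_num)).hasFDerivAt
  have h2 : HasFDerivAt (fun y => fderiv ℝ f y e)
      (fderiv ℝ (fun y => fderiv ℝ f y e) x) x := (diff_fderiv_apply e hf).hasFDerivAt
  have h3 := h1.fun_mul h2
  rw [h3.fderiv]
  simp only [ContinuousLinearMap.add_apply, ContinuousLinearMap.smul_apply, smul_eq_mul]
  ring

lemma fderiv2_mul {f g : E → ℝ} {x : E} (e : E)
    (hf : ContDiffAt ℝ 2 f x) (hg : ContDiffAt ℝ 2 g x) :
    fderiv ℝ (fun y => fderiv ℝ (fun z => f z * g z) y e) x e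
      = f x * fderiv ℝ (fun y => fderiv ℝ g y e) x e
        + 2 * (fderiv ℝ f x e) * (fderiv ℝ g x e)
        + g x * fderiv ℝ (fun y => fderiv ℝ f y e) x e := by
  have hfd : ∀ᶠ y in nhds x, DifferentiableAt ℝ f y := by
    filter_upwards [hf.eventually (by norm_num)] with y hy
    exact hy.differentiableAt (by norm_num)
  have hgd : ∀ᶠ y in nhds x, DifferentiableAt ℝ g y := by
    filter_upwards [hg.eventually (by norm_num)] with y hy
    exact hy.differentiableAt (by norm_num)
  have key : (fun y => fderiv ℝ (fun z => f z * g z) y e)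
      =ᶠ[nhds x] fun y => f y * fderiv ℝ g y e + g y * fderiv ℝ f y e := by
    filter_upwards [hfd, hgd] with y hdy hgy
    rw [fderiv_fun_mul hdy hgy]
    simp
  rw [key.fderiv_eq]
  have h1 : HasFDerivAt f (fderiv ℝ f x) x := (hf.differentiableAt (by norm_num)).hasFDerivAt
  have h2 : HasFDerivAt (fun y => fderiv ℝ g y e)
      (fderiv ℝ (fun y => fderiv ℝ g y e) x) x := (diff_fderiv_apply e hg).hasFDerivAt
  have h3 : HasFDerivAt g (fderiv ℝ g x) x := (hg.differentiableAt (by norm_num)).hasFDerivAt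
  have h4 : HasFDerivAt (fun y => fderiv ℝ f y e)
      (fderiv ℝ (fun y => fderiv ℝ f y e) x) x := (diff_fderiv_apply e hf).hasFDerivAt
  have h5 := (h1.fun_mul h2).fun_add (h3.fun_mul h4)
  rw [h5.fderiv]
  simp only [ContinuousLinearMap.add_apply, ContinuousLinearMap.smul_apply, smul_eq_mul]
  ring

lemma fderiv2_add {f g : E → ℝ} {x : E} (e : E)
    (hf : ContDiffAt ℝ 2 f x) (hg : ContDiffAt ℝ 2 g x) :
    fderiv ℝ (fun y => fderiv ℝ (fun z => f z + g z) y e) x e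
      = fderiv ℝ (fun y => fderiv ℝ f y e) x e
        + fderiv ℝ (fun y => fderiv ℝ g y e) x e := by
  have hfd : ∀ᶠ y in nhds x, DifferentiableAt ℝ f y := by
    filter_upwards [hf.eventually (by norm_num)] with y hy
    exact hy.differentiableAt (by norm_num)
  have hgd : ∀ᶠ y in nhds x, DifferentiableAt ℝ g y := by
    filter_upwards [hg.eventually (by norm_num)] with y hy
    exact hy.differentiableAt (by norm_num)
  have key : (fun y => fderiv ℝ (fun z => f z + g z) y e)
      =ᶠ[nhds x] fun y => fderiv ℝ f y e + fderiv ℝ g y e := by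
    filter_upwards [hfd, hgd] with y hdy hgy
    rw [fderiv_fun_add hdy hgy]
    simp
  rw [key.fderiv_eq]
  rw [fderiv_fun_add (diff_fderiv_apply e hf) (diff_fderiv_apply e hg)]
  simp

lemma fderiv2_sub {f g : E → ℝ} {x : E} (e : E)
    (hf : ContDiffAt ℝ 2 f x) (hg : ContDiffAt ℝ 2 g x) :
    fderiv ℝ (fun y => fderiv ℝ (fun z => f z - g z) y e) x e
      = fderiv ℝ (fun y => fderiv ℝ f y e) x e
        - fderiv ℝ (fun y => fderiv ℝ g y e) x e := by
  have hfd : ∀ᶠ y in nhds x, DifferentiableAt ℝ f y := by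
    filter_upwards [hf.eventually (by norm_num)] with y hy
    exact hy.differentiableAt (by norm_num)
  have hgd : ∀ᶠ y in nhds x, DifferentiableAt ℝ g y := by
    filter_upwards [hg.eventually (by norm_num)] with y hy
    exact hy.differentiableAt (by norm_num)
  have key : (fun y => fderiv ℝ (fun z => f z - g z) y e)
      =ᶠ[nhds x] fun y => fderiv ℝ f y e - fderiv ℝ g y e := by
    filter_upwards [hfd, hgd] with y hdy hgy
    rw [fderiv_fun_sub hdy hgy]
    simp
  rw [key.fderiv_eq]
  have diff_fderiv_apply : ∀ (h : EuclideanSpace ℝ (Fin N) → ℝ), ContDiffAt ℝ 2 h x →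
      DifferentiableAt ℝ (fun y => fderiv ℝ h y e) x := by
    intro h hh
    have h1 : ContDiffAt ℝ 1 (fderiv ℝ h) x := hh.fderiv_right (by norm_num)
    exact (ContinuousLinearMap.apply ℝ ℝ e).differentiableAt.comp x (h1.differentiableAt (by norm_num))
  rw [fderiv_fun_sub (diff_fderiv_apply f hf) (diff_fderiv_apply g hg)]
  simp

-- wrappers pinning the syntactic function
lemma fderiv2_comp' {F f : E → ℝ} {g g' g'' : ℝ → ℝ} {x : E} (e : E)
    (hF : F = fun z => g (f z))
    (hf : ContDiffAt ℝ 2 f x)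
    (hg : ∀ᶠ t in nhds (f x), HasDerivAt g (g' t) t)
    (hg' : HasDerivAt g' (g'' (f x)) (f x)) :
    fderiv ℝ (fun y => fderiv ℝ F y e) x e
      = g'' (f x) * (fderiv ℝ f x e) ^ 2
        + g' (f x) * fderiv ℝ (fun y => fderiv ℝ f y e) x e := by
  rw [hF]; exact fderiv2_comp e hf hg hg'

lemma fderiv2_mul' {F f g : E → ℝ} {x : E} (e : E)
    (hF : F = fun z => f z * g z)
    (hf : ContDiffAt ℝ 2 f x) (hg : ContDiffAt ℝ 2 g x) :
    fderiv ℝ (fun y => fderiv ℝ F y e) x e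
      = f x * fderiv ℝ (fun y => fderiv ℝ g y e) x e
        + 2 * (fderiv ℝ f x e) * (fderiv ℝ g x e)
        + g x * fderiv ℝ (fun y => fderiv ℝ f y e) x e := by
  rw [hF]; exact fderiv2_mul e hf hg

lemma fderiv2_add' {F f g : E → ℝ} {x : E} (e : E)
    (hF : F = fun z => f z + g z)
    (hf : ContDiffAt ℝ 2 f x) (hg : ContDiffAt ℝ 2 g x) :
    fderiv ℝ (fun y => fderiv ℝ F y e) x e
      = fderiv ℝ (fun y => fderiv ℝ f y e) x e
        + fderiv ℝ (fun y => fderiv ℝ g y e) x e := by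
  rw [hF]; exact fderiv2_add e hf hg

lemma fderiv2_sub' {F f g : E → ℝ} {x : E} (e : E)
    (hF : F = fun z => f z - g z)
    (hf : ContDiffAt ℝ 2 f x) (hg : ContDiffAt ℝ 2 g x) :
    fderiv ℝ (fun y => fderiv ℝ F y e) x e
      = fderiv ℝ (fun y => fderiv ℝ f y e) x e
        - fderiv ℝ (fun y => fderiv ℝ g y e) x e := by
  rw [hF]; exact fderiv2_sub e hf hg

lemma lapl_A_nonneg {u v : E → ℝ} {χ σ σ' : ℝ → ℝ} {x : E}
    (hu2 : ContDiffAt ℝ 2 u x) (hv2 : ContDiffAt ℝ 2 v x)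
    (hχ2 : ContDiff ℝ 2 χ)
    (hχd : ∀ t, HasDerivAt χ (σ t) t) (hσd : ∀ t, HasDerivAt σ (σ' t) t)
    (hσnn : ∀ t, 0 ≤ σ t) (hσ'nn : ∀ t, 0 ≤ σ' t)
    (hS : 0 < u x ^ 2 + v x ^ 2)
    (hlu : lapl u x = 0) (hlv : lapl v x = 0) :
    0 ≤ lapl (fun z => u z + χ (Real.sqrt (u z ^ 2 + v z ^ 2) - u z)) x := by
  have hfunrw : (fun z => u z + χ (Real.sqrt (u z ^ 2 + v z ^ 2) - u z))
      = (fun z => u z + χ (Real.sqrt (u z * u z + v z * v z) - u z)) := by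
    funext z; ring_nf
  rw [hfunrw]
  -- notation
  set Sx : ℝ := u x * u x + v x * v x with hSx
  have hSpos : 0 < Sx := by rw [hSx]; nlinarith [hS]
  have hrt : 0 < Real.sqrt Sx := Real.sqrt_pos.2 hSpos
  have hss : Real.sqrt Sx ^ 2 = Sx := Real.sq_sqrt hSpos.le
  set c : ℝ := -(4 * Sx * Real.sqrt Sx)⁻¹ with hc
  set s1 : ℝ := (2 * Real.sqrt Sx)⁻¹ with hs1
  -- smoothness of pieces
  have hS2 : ContDiffAt ℝ 2 (fun z => u z * u z + v z * v z) x :=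
    (hu2.mul hu2).add (hv2.mul hv2)
  have hm2 : ContDiffAt ℝ 2 (fun z => Real.sqrt (u z * u z + v z * v z)) x :=
    (Real.contDiffAt_sqrt hSpos.ne').comp x hS2
  have hw2 : ContDiffAt ℝ 2 (fun z => Real.sqrt (u z * u z + v z * v z) - u z) x :=
    hm2.sub hu2
  have hχw2 : ContDiffAt ℝ 2 (fun z => χ (Real.sqrt (u z * u z + v z * v z) - u z)) x :=
    hχ2.contDiffAt.comp x hw2
  -- derivative of the outer sqrt chain
  have hsder : HasDerivAt (fun t : ℝ => (2 * Real.sqrt t)⁻¹) c Sx := by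
    have h0 := Real.hasDerivAt_sqrt hSpos.ne'
    have h1 := (h0.const_mul (2 : ℝ)).inv (by positivity)
    refine HasDerivAt.congr_deriv (f := fun t : ℝ => (2 * Real.sqrt t)⁻¹) h1 ?_
    symm
    rw [hc]
    field_simp
    nlinarith [hss, hrt]
  have hsqev : ∀ᶠ t in nhds Sx, HasDerivAt Real.sqrt ((2 * Real.sqrt t)⁻¹) t := by
    filter_upwards [Ioi_mem_nhds hSpos] with t (ht : 0 < t)
    simpa [one_div] using Real.hasDerivAt_sqrt ht.ne'
  -- abbreviations per coordinate
  set e : Fin N → EuclideanSpace ℝ (Fin N) := fun i => EuclideanSpace.single i 1 with he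
  set p : Fin N → ℝ := fun i => fderiv ℝ u x (e i) with hp
  set q : Fin N → ℝ := fun i => fderiv ℝ v x (e i) with hq
  set a : Fin N → ℝ := fun i =>
    fderiv ℝ (fun y => fderiv ℝ u y (e i)) x (e i) with ha
  set b : Fin N → ℝ := fun i =>
    fderiv ℝ (fun y => fderiv ℝ v y (e i)) x (e i) with hb
  set r : Fin N → ℝ := fun i =>
    fderiv ℝ (fun z => Real.sqrt (u z * u z + v z * v z) - u z) x (e i) with hr
  set wx : ℝ := Real.sqrt (u x * u x + v x * v x) - u x with hwx
  have heE : ∀ i : Fin N, EuclideanSpace.single i (1:ℝ) = e i := fun _ => rfl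
  have hpE : ∀ i, (fderiv ℝ u x) (e i) = p i := fun _ => rfl
  have hqE : ∀ i, (fderiv ℝ v x) (e i) = q i := fun _ => rfl
  have haE : ∀ i, (fderiv ℝ (fun y => (fderiv ℝ u y) (e i)) x) (e i) = a i := fun _ => rfl
  have hbE : ∀ i, (fderiv ℝ (fun y => (fderiv ℝ v y) (e i)) x) (e i) = b i := fun _ => rfl
  have hrE : ∀ i, (fderiv ℝ (fun z => Real.sqrt (u z * u z + v z * v z) - u z) x) (e i) = r i :=
    fun _ => rfl
  have hwxE : Real.sqrt (u x * u x + v x * v x) - u x = wx := rfl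
  -- first derivative of S
  have hu1 : HasFDerivAt u (fderiv ℝ u x) x := (hu2.differentiableAt (by norm_num)).hasFDerivAt
  have hv1 : HasFDerivAt v (fderiv ℝ v x) x := (hv2.differentiableAt (by norm_num)).hasFDerivAt
  have hf1S : ∀ i, fderiv ℝ (fun z => u z * u z + v z * v z) x (e i)
      = 2 * u x * p i + 2 * v x * q i := by
    intro i
    have h := ((hu1.fun_mul hu1).fun_add (hv1.fun_mul hv1))
    rw [h.fderiv]
    simp only [ContinuousLinearMap.add_apply, ContinuousLinearMap.smul_apply, smul_eq_mul]
    simp only [hpE, hqE]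
    ring
  -- second derivative of S
  have hf2S : ∀ i, fderiv ℝ (fun y => fderiv ℝ (fun z => u z * u z + v z * v z) y (e i)) x (e i)
      = 2 * u x * a i + 2 * p i ^ 2 + 2 * v x * b i + 2 * q i ^ 2 := by
    intro i
    rw [fderiv2_add' (e i) rfl (hu2.mul hu2) (hv2.mul hv2),
      fderiv2_mul' (e i) rfl hu2 hu2, fderiv2_mul' (e i) rfl hv2 hv2]
    simp only [hpE, hqE, haE, hbE]
    ring
  -- second derivative of m = sqrt S
  have hf2m : ∀ i, fderiv ℝ (fun y => fderiv ℝ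
        (fun z => Real.sqrt (u z * u z + v z * v z)) y (e i)) x (e i)
      = c * (2 * u x * p i + 2 * v x * q i) ^ 2
        + s1 * (2 * u x * a i + 2 * p i ^ 2 + 2 * v x * b i + 2 * q i ^ 2) := by
    intro i
    rw [fderiv2_comp' (e i) rfl hS2 hsqev (g'' := fun _ => c) hsder, hf1S i, hf2S i]
  -- second derivative of w
  have hf2w : ∀ i, fderiv ℝ (fun y => fderiv ℝ
        (fun z => Real.sqrt (u z * u z + v z * v z) - u z) y (e i)) x (e i)
      = c * (2 * u x * p i + 2 * v x * q i) ^ 2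
        + s1 * (2 * u x * a i + 2 * p i ^ 2 + 2 * v x * b i + 2 * q i ^ 2) - a i := by
    intro i
    rw [fderiv2_sub' (e i) rfl hm2 hu2, hf2m i]
  -- key identity per coordinate
  have key : ∀ i, fderiv ℝ (fun y => fderiv ℝ
        (fun z => u z + χ (Real.sqrt (u z * u z + v z * v z) - u z)) y (e i)) x (e i)
      = ((1 - σ wx) + σ wx * s1 * (2 * u x)) * a i + (σ wx * s1 * (2 * v x)) * b i
        + (σ' wx * r i ^ 2
           + σ wx * (c * (2 * u x * p i + 2 * v x * q i) ^ 2
                      + s1 * (2 * p i ^ 2 + 2 * q i ^ 2))) := by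
    intro i
    rw [fderiv2_add' (e i) rfl hu2 hχw2,
      fderiv2_comp' (e i) rfl hw2 (Eventually.of_forall hχd) (hσd _), hf2w i]
    beta_reduce
    simp only [hpE, hqE, haE, hbE, hrE, hwxE]
    ring
  -- assemble
  show 0 ≤ lapl _ x
  rw [lapl]
  simp only [heE]
  have hsum : ∑ i : Fin N, fderiv ℝ (fun y => fderiv ℝ
        (fun z => u z + χ (Real.sqrt (u z * u z + v z * v z) - u z)) y (e i)) x (e i)
      = ((1 - σ wx) + σ wx * s1 * (2 * u x)) * (∑ i, a i)
        + (σ wx * s1 * (2 * v x)) * (∑ i, b i)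
        + ∑ i, (σ' wx * r i ^ 2
           + σ wx * (c * (2 * u x * p i + 2 * v x * q i) ^ 2
                      + s1 * (2 * p i ^ 2 + 2 * q i ^ 2))) := by
    rw [Finset.mul_sum, Finset.mul_sum, ← Finset.sum_add_distrib, ← Finset.sum_add_distrib]
    exact Finset.sum_congr rfl fun i _ => key i
  have hsa : (∑ i, a i) = 0 := hlu
  have hsb : (∑ i, b i) = 0 := hlv
  rw [hsum, hsa, hsb, mul_zero, mul_zero, zero_add, zero_add]
  apply Finset.sum_nonneg
  intro i _
  have t1 : 0 ≤ σ' wx * r i ^ 2 := mul_nonneg (hσ'nn _) (sq_nonneg _)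
  have hG : (2 * u x * p i + 2 * v x * q i) ^ 2 ≤ 4 * Sx * (p i ^ 2 + q i ^ 2) := by
    rw [hSx]
    nlinarith [sq_nonneg (u x * q i - v x * p i)]
  have hcneg : c ≤ 0 := by rw [hc]; simp; positivity
  have t2 : 0 ≤ c * (2 * u x * p i + 2 * v x * q i) ^ 2
      + s1 * (2 * p i ^ 2 + 2 * q i ^ 2) := by
    have h1 : c * (4 * Sx * (p i ^ 2 + q i ^ 2))
        ≤ c * (2 * u x * p i + 2 * v x * q i) ^ 2 :=
      mul_le_mul_of_nonpos_left hG hcneg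
    have h2 : c * (4 * Sx * (p i ^ 2 + q i ^ 2)) + s1 * (2 * p i ^ 2 + 2 * q i ^ 2) = 0 := by
      rw [hc, hs1]
      field_simp
      ring
    linarith
  exact add_nonneg t1 (mul_nonneg (hσnn _) t2)

lemma lapl_congr {f g : E → ℝ} {x : E} (h : f =ᶠ[nhds x] g) : lapl f x = lapl g x :=
  Finset.sum_congr rfl fun i _ => fderiv2_congr _ h

lemma lapl_zero_of_eventually_zero {f : E → ℝ} {x : E}
    (h : f =ᶠ[nhds x] fun _ => (0 : ℝ)) : lapl f x = 0 := by
  rw [lapl_congr h, lapl]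
  have : ∀ i : Fin N, fderiv ℝ (fun y => fderiv ℝ (fun _ : E => (0:ℝ)) y
      (EuclideanSpace.single i 1)) x (EuclideanSpace.single i 1) = 0 := by
    intro i
    simp [fderiv_const]
  simp [this]

lemma lapl_zero_off_tsupport {f : E → ℝ} {x : E} (h : x ∉ tsupport f) : lapl f x = 0 := by
  apply lapl_zero_of_eventually_zero
  filter_upwards [(isClosed_tsupport f).isOpen_compl.mem_nhds h] with y hy
  exact image_eq_zero_of_notMem_tsupport hy

end AuxCalc

/-- If `u, v ≥ 0` are continuous on the unit ball `B₁`, harmonic on their positivity sets,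
with `{v>0} ⊆ {u>0}`, then `m = √(u² + v²)` is distributionally subharmonic on `{u>0}`. -/
theorem modulus_subharmonic {N : ℕ} (u v : EuclideanSpace ℝ (Fin N) → ℝ)
    (B₁ : Set (EuclideanSpace ℝ (Fin N))) (hB₁ : B₁ = ball 0 1)
    (hu_cont : ContinuousOn u B₁) (hv_cont : ContinuousOn v B₁)
    (hu_nonneg : ∀ x ∈ B₁, 0 ≤ u x) (hv_nonneg : ∀ x ∈ B₁, 0 ≤ v x)
    (hu_harm : IsHarmonicOn u ({x ∈ B₁ | 0 < u x}))
    (hv_harm : IsHarmonicOn v ({x ∈ B₁ | 0 < v x}))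
    (h_incl : {x ∈ B₁ | 0 < v x} ⊆ {x ∈ B₁ | 0 < u x}) :
    IsSubharmonicDistribOn (fun x => Real.sqrt (u x ^ 2 + v x ^ 2)) {x ∈ B₁ | 0 < u x} := by
  intro φ hφ hφc hφsupp hφnn
  set Ω : Set (EuclideanSpace ℝ (Fin N)) := {x ∈ B₁ | 0 < u x} with hΩ
  set V : Set (EuclideanSpace ℝ (Fin N)) := {x ∈ B₁ | 0 < v x} with hV
  set m : EuclideanSpace ℝ (Fin N) → ℝ := fun x => Real.sqrt (u x ^ 2 + v x ^ 2) with hm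
  have hB1open : IsOpen B₁ := by rw [hB₁]; exact isOpen_ball
  have hΩopen : IsOpen Ω := by
    have : Ω = B₁ ∩ u ⁻¹' Ioi 0 := rfl
    rw [this]
    exact hu_cont.isOpen_inter_preimage hB1open isOpen_Ioi
  have hVopen : IsOpen V := by
    have : V = B₁ ∩ v ⁻¹' Ioi 0 := rfl
    rw [this]
    exact hv_cont.isOpen_inter_preimage hB1open isOpen_Ioi
  have hΩB : Ω ⊆ B₁ := fun x hx => hx.1
  have hφ2 : ContDiff ℝ 2 φ := hφ.of_le
    (calc (2 : WithTop ℕ∞) = ((2 : ℕ∞) : WithTop ℕ∞) := by norm_cast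
      _ ≤ _ := WithTop.coe_le_coe.2 le_top)
  -- trivial case : empty support
  rcases eq_empty_or_nonempty (tsupport φ) with hemp | hne
  · have hz : ∀ x, lapl φ x = 0 := fun x =>
      lapl_zero_off_tsupport (by rw [hemp]; exact notMem_empty x)
    have : ∀ x, m x * lapl φ x = 0 := fun x => by rw [hz x, mul_zero]
    rw [setIntegral_congr_fun hΩopen.measurableSet (fun x _ => this x)]
    simp
  -- the cutoff ρ
  obtain ⟨β, hβsupp, hβsm, hβrange⟩ := hΩopen.exists_contDiff_support_eq (n := (⊤ : ℕ∞))
  obtain ⟨x₀, hx₀K, hmin⟩ := hφc.exists_isMinOn hne hβsm.continuous.continuousOn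
  have hβx₀ : 0 < β x₀ := by
    have h1 : x₀ ∈ Function.support β := by rw [hβsupp]; exact hφsupp hx₀K
    have h2 : 0 ≤ β x₀ := (hβrange (mem_range_self x₀)).1
    exact lt_of_le_of_ne h2 (Ne.symm h1)
  set ε : ℝ := β x₀ / 2 with hε
  have hεpos : 0 < ε := by positivity
  set ρ : EuclideanSpace ℝ (Fin N) → ℝ :=
    fun y => Real.smoothTransition (2 * β y / ε - 1) with hρ
  have hβ2 : ContDiff ℝ 2 β := hβsm.of_le
    (calc (2 : WithTop ℕ∞) = ((2 : ℕ∞) : WithTop ℕ∞) := by norm_cast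
      _ ≤ _ := WithTop.coe_le_coe.2 le_top)
  have hρ2 : ContDiff ℝ 2 ρ :=
    Real.smoothTransition.contDiff.comp
      (((contDiff_const.mul hβ2).div_const ε).sub contDiff_const)
  have hρ_one : ∀ y, ε < β y → ρ y = 1 := by
    intro y hy
    apply Real.smoothTransition.one_of_one_le
    have h2 : (2:ℝ) ≤ 2 * β y / ε := by
      rw [le_div_iff₀ hεpos]
      linarith
    linarith
  have hρ_zero : ∀ y, β y < ε / 2 → ρ y = 0 := by
    intro y hy
    apply Real.smoothTransition.zero_of_nonpos
    rw [sub_nonpos, div_le_one hεpos]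
    linarith
  have hOopen : IsOpen (β ⁻¹' Ioi ε) := isOpen_Ioi.preimage hβsm.continuous
  have hKO : tsupport φ ⊆ β ⁻¹' Ioi ε := by
    intro x hx
    have := hmin hx
    simp only [mem_preimage, mem_Ioi]
    calc ε < β x₀ := by rw [hε]; linarith
      _ ≤ β x := this
  have hρc : HasCompactSupport ρ := by
    apply HasCompactSupport.intro (K := β ⁻¹' Ici (ε / 2)) ?_ ?_
    · apply Metric.isCompact_of_isClosed_isBounded (isClosed_Ici.preimage hβsm.continuous)
      apply Metric.isBounded_ball.subset
      intro y hy
      have hy' : ε / 2 ≤ β y := hy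
      have h1 : y ∈ Function.support β :=
        Function.mem_support.2 (ne_of_gt (lt_of_lt_of_le (by positivity) hy'))
      rw [hβsupp] at h1
      rw [← hB₁]
      exact hΩB h1
    · intro x hx
      exact hρ_zero x (by simpa using hx)
  -- continuity of m on B₁
  have hm_cont : ContinuousOn m B₁ := by
    apply ContinuousOn.comp (f := fun x => u x ^ 2 + v x ^ 2)
      (g := Real.sqrt) ?_ ?_ (mapsTo_univ _ _)
    · exact Real.continuous_sqrt.continuousOn
    · exact (hu_cont.pow 2).add (hv_cont.pow 2)
  have hw_nonneg : ∀ x, 0 ≤ m x - u x := by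
    intro x
    rw [hm, sub_nonneg]
    calc u x ≤ |u x| := le_abs_self _
      _ = Real.sqrt (u x ^ 2) := (Real.sqrt_sq_eq_abs _).symm
      _ ≤ Real.sqrt (u x ^ 2 + v x ^ 2) := Real.sqrt_le_sqrt (by nlinarith [sq_nonneg (v x)])
  -- lapl φ support facts
  have hlφ : ∀ x, x ∉ tsupport φ → lapl φ x = 0 := fun x hx => lapl_zero_off_tsupport hx
  have hlφc : HasCompactSupport (lapl φ) := HasCompactSupport.intro hφc hlφ
  have hlφcont : Continuous (lapl φ) := continuous_lapl hφ2
  set C0 : ℝ := ∫ x, |lapl φ x| with hC0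
  have hC0nn : 0 ≤ C0 := integral_nonneg fun x => abs_nonneg _
  have hint_abs : Integrable fun x => |lapl φ x| :=
    (hlφcont.abs).integrable_of_hasCompactSupport hlφc.abs
  -- main integral as a global integral
  set I : ℝ := ∫ x in Ω, m x * lapl φ x with hI
  have hIglob : I = ∫ x, m x * lapl φ x := by
    apply setIntegral_eq_integral_of_forall_compl_eq_zero
    intro x hx
    rw [hlφ x (fun h => hx (hφsupp h)), mul_zero]
  show 0 ≤ I
  -- reduce to the δ-estimate
  suffices hkey : ∀ δ : ℝ, 0 < δ → -(2 * δ * C0) ≤ I by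
    by_contra hneg
    push_neg at hneg
    have h4 : (0:ℝ) < 4 * C0 + 1 := by positivity
    have hδ : 0 < -I / (4 * C0 + 1) := div_pos (by linarith) h4
    have hthis := hkey _ hδ
    have h6 := mul_le_mul_of_nonneg_right hthis h4.le
    have h7 : -(2 * (-I / (4 * C0 + 1)) * C0) * (4 * C0 + 1) = 2 * I * C0 := by
      field_simp
    rw [h7] at h6
    nlinarith [h6, hneg, hC0nn, mul_nonneg hC0nn (neg_nonneg.2 hneg.le)]
  intro δ hδ
  obtain ⟨χ, σ, σ', hχ2, hχd, hσd, hσnn, hσ'nn, hχ0, hχbd⟩ := exists_chi hδ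
  set A : EuclideanSpace ℝ (Fin N) → ℝ :=
    fun z => u z + χ (Real.sqrt (u z ^ 2 + v z ^ 2) - u z) with hA
  set F : EuclideanSpace ℝ (Fin N) → ℝ := fun z => ρ z * A z with hF
  -- the "small w" open set
  set O2 : Set (EuclideanSpace ℝ (Fin N)) := Ω ∩ (fun z => m z - u z) ⁻¹' Iio δ with hO2
  have hO2open : IsOpen O2 :=
    ((hm_cont.mono hΩB).sub (hu_cont.mono hΩB)).isOpen_inter_preimage hΩopen isOpen_Iio
  have hAu_onO2 : ∀ z ∈ O2, A z = u z := by
    intro z hz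
    show u z + χ (Real.sqrt (u z ^ 2 + v z ^ 2) - u z) = u z
    have hz2 : (m z - u z : ℝ) < δ := hz.2
    have : χ (Real.sqrt (u z ^ 2 + v z ^ 2) - u z) = 0 := hχ0 _ (le_of_lt hz2)
    rw [this, add_zero]
  have hmem_O2 : ∀ z ∈ Ω, v z = 0 → z ∈ O2 := by
    intro z hzΩ hvz
    refine ⟨hzΩ, ?_⟩
    have : m z - u z = 0 := by
      show Real.sqrt (u z ^ 2 + v z ^ 2) - u z = 0
      rw [hvz, show (0:ℝ) ^ 2 = 0 by norm_num, add_zero, Real.sqrt_sq (le_of_lt hzΩ.2), sub_self]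
    simp only [mem_preimage, mem_Iio, this]
    exact hδ
  -- ContDiffAt of A on Ω
  have hA2at : ∀ x ∈ Ω, ContDiffAt ℝ 2 A x := by
    intro x hx
    rcases lt_or_eq_of_le (hv_nonneg x (hΩB hx)) with hvx | hvx
    · -- v x > 0
      have hxV : x ∈ V := ⟨hΩB hx, hvx⟩
      have hu2 : ContDiffAt ℝ 2 u x := hu_harm.1.contDiffAt (hΩopen.mem_nhds hx)
      have hv2 : ContDiffAt ℝ 2 v x := hv_harm.1.contDiffAt (hVopen.mem_nhds hxV)
      have hSpos : (0:ℝ) < u x ^ 2 + v x ^ 2 := by nlinarith [hx.2]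
      have hPow : (fun z => u z ^ 2 + v z ^ 2) = (fun z => u z * u z + v z * v z) := by
        funext z; ring
      have hS2 : ContDiffAt ℝ 2 (fun z => u z ^ 2 + v z ^ 2) x := by
        rw [hPow]; exact (hu2.mul hu2).add (hv2.mul hv2)
      have hm2 : ContDiffAt ℝ 2 (fun z => Real.sqrt (u z ^ 2 + v z ^ 2)) x :=
        (Real.contDiffAt_sqrt hSpos.ne').comp x hS2
      exact hu2.add (hχ2.contDiffAt.comp x (hm2.sub hu2))
    · -- v x = 0
      have hxO2 : x ∈ O2 := hmem_O2 x hx hvx.symm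
      have hu2 : ContDiffAt ℝ 2 u x := hu_harm.1.contDiffAt (hΩopen.mem_nhds hx)
      apply hu2.congr_of_eventuallyEq
      filter_upwards [hO2open.mem_nhds hxO2] with z hz
      exact hAu_onO2 z hz
  -- global C² and compact support of F
  have hF2 : ContDiff ℝ 2 F := by
    rw [contDiff_iff_contDiffAt]
    intro x
    by_cases hx : x ∈ Ω
    · exact hρ2.contDiffAt.mul (hA2at x hx)
    · have hρ0 : ρ =ᶠ[nhds x] fun _ => 0 := by
        have hxc : x ∈ (β ⁻¹' Ici (ε/2))ᶜ := by
          simp only [mem_compl_iff, mem_preimage, mem_Ici, not_le]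
          by_contra h
          push_neg at h
          have : x ∈ Function.support β := by
            rw [Function.mem_support]
            intro h0
            rw [h0] at h
            nlinarith
          rw [hβsupp] at this
          exact hx this
        filter_upwards [((isClosed_Ici.preimage hβsm.continuous).isOpen_compl).mem_nhds hxc]
          with z hz
        exact hρ_zero z (by simpa using hz)
      apply contDiffAt_const (c := (0:ℝ)) |>.congr_of_eventuallyEq
      filter_upwards [hρ0] with z hz
      show ρ z * A z = 0
      rw [hz]
      simp
  have hFc : HasCompactSupport F := by
    apply HasCompactSupport.intro (K := β ⁻¹' Ici (ε / 2))
    · apply Metric.isCompact_of_isClosed_isBounded (isClosed_Ici.preimage hβsm.continuous)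
      apply Metric.isBounded_ball.subset
      intro y hy
      have hy' : ε / 2 ≤ β y := hy
      have h1 : y ∈ Function.support β :=
        Function.mem_support.2 (ne_of_gt (lt_of_lt_of_le (by positivity) hy'))
      rw [hβsupp] at h1
      rw [← hB₁]
      exact hΩB h1
    · intro x hx
      show ρ x * A x = 0
      rw [hρ_zero x (by simpa using hx), zero_mul]
  -- nonnegativity of lapl F on tsupport φ
  have hlFnn : ∀ x ∈ tsupport φ, 0 ≤ lapl F x := by
    intro x hx
    have hxΩ : x ∈ Ω := hφsupp hx
    have hFA : lapl F x = lapl A x := by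
      apply lapl_congr
      filter_upwards [hOopen.mem_nhds (hKO hx)] with z hz
      show ρ z * A z = A z
      rw [hρ_one z hz, one_mul]
    rw [hFA]
    rcases lt_or_eq_of_le (hv_nonneg x (hΩB hxΩ)) with hvx | hvx
    · have hxV : x ∈ V := ⟨hΩB hxΩ, hvx⟩
      have hu2 : ContDiffAt ℝ 2 u x := hu_harm.1.contDiffAt (hΩopen.mem_nhds hxΩ)
      have hv2 : ContDiffAt ℝ 2 v x := hv_harm.1.contDiffAt (hVopen.mem_nhds hxV)
      exact lapl_A_nonneg hu2 hv2 hχ2 hχd hσd hσnn hσ'nn (by nlinarith [hxΩ.2])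
        (hu_harm.2 x hxΩ) (hv_harm.2 x hxV)
    · have hxO2 : x ∈ O2 := hmem_O2 x hxΩ hvx.symm
      have : lapl A x = lapl u x := by
        apply lapl_congr
        filter_upwards [hO2open.mem_nhds hxO2] with z hz
        exact hAu_onO2 z hz
      rw [this, hu_harm.2 x hxΩ]
  -- integrability
  have hint1 : Integrable fun x => F x * lapl φ x :=
    (hF2.continuous.mul hlφcont).integrable_of_hasCompactSupport hlφc.mul_left
  have hcont2 : Continuous fun x => (m x - F x) * lapl φ x := by
    rw [continuous_iff_continuousAt]
    intro x
    by_cases hx : x ∈ Ω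
    · have hmc : ContinuousAt m x := (hm_cont.continuousAt (hB1open.mem_nhds (hΩB hx)))
      exact ((hmc.sub hF2.continuous.continuousAt).mul hlφcont.continuousAt)
    · have : (fun x => (m x - F x) * lapl φ x) =ᶠ[nhds x] fun _ => 0 := by
        have hxn : x ∈ (tsupport φ)ᶜ := fun h => hx (hφsupp h)
        filter_upwards [(isClosed_tsupport φ).isOpen_compl.mem_nhds hxn] with z hz
        rw [hlφ z hz, mul_zero]
      exact continuousAt_const.congr this.symm
  have hint2 : Integrable fun x => (m x - F x) * lapl φ x := by
    apply hcont2.integrable_of_hasCompactSupport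
    apply HasCompactSupport.intro hφc
    intro x hx
    rw [hlφ x hx, mul_zero]
  -- split the integral
  have hsplit : I = (∫ x, F x * lapl φ x) + ∫ x, (m x - F x) * lapl φ x := by
    rw [hIglob, ← integral_add hint1 hint2]
    congr 1
    funext x
    ring
  -- the first integral is nonnegative
  have h1 : 0 ≤ ∫ x, F x * lapl φ x := by
    rw [ibp hF2 hFc hφ2 hφc]
    apply integral_nonneg
    intro x
    show 0 ≤ lapl F x * φ x
    by_cases hx : x ∈ tsupport φ
    · exact mul_nonneg (hlFnn x hx) (hφnn x)
    · rw [image_eq_zero_of_notMem_tsupport hx, mul_zero]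
  -- the second integral is small
  have h2 : |∫ x, (m x - F x) * lapl φ x| ≤ 2 * δ * C0 := by
    have hb : ∀ x, |(m x - F x) * lapl φ x| ≤ 2 * δ * |lapl φ x| := by
      intro x
      by_cases hx : x ∈ tsupport φ
      · rw [abs_mul]
        apply mul_le_mul_of_nonneg_right ?_ (abs_nonneg _)
        have hρ1 : ρ x = 1 := hρ_one x (hKO hx)
        have hFx : F x = A x := by
          show ρ x * A x = A x
          rw [hρ1, one_mul]
        have hwnn := hw_nonneg x
        obtain ⟨hb1, hb2⟩ := hχbd (m x - u x) hwnn
        have heq : m x - F x = (m x - u x) - χ (m x - u x) := by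
          rw [hFx]
          show m x - (u x + χ (m x - u x)) = (m x - u x) - χ (m x - u x)
          ring
        rw [heq, abs_of_nonneg hb1]
        exact hb2
      · rw [hlφ x hx, mul_zero, abs_zero, mul_zero]
    calc |∫ x, (m x - F x) * lapl φ x| ≤ ∫ x, |(m x - F x) * lapl φ x| := by
          simpa only [Real.norm_eq_abs] using
            norm_integral_le_integral_norm (μ := volume) fun x => (m x - F x) * lapl φ x
      _ ≤ ∫ x, 2 * δ * |lapl φ x| := by
          apply integral_mono hint2.abs (hint_abs.const_mul _)
          exact hb
      _ = 2 * δ * C0 := by rw [integral_const_mul, hC0]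
  rw [hsplit]
  have := neg_abs_le (∫ x, (m x - F x) * lapl φ x)
  linarith [h1, h2, this]
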